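/- arXiv:math/0611598 — 2 statements merged into one kernel-verified Lean document; each statement's English description precedes it below -/
import Mathlib

section
/- Let H be a real antisymmetric d×d matrix (Hᵀ = −H) and let |H| = (−H²)^{1/2} denote the positive semidefinite square root of −H² = HᵀH. Then for all u, v ∈ ℝ^d, |uᵀHv| ≤ (uᵀ|H|u)^{1/2} (vᵀ|H|v)^{1/2}. -/
/-!
Since `H` is skew, `H Hᵀ = Hᵀ H = -H² = K²`. Hence the symmetric block matrix
`J = [[0, H], [Hᵀ, 0]]` satisfies `J² = diag(K, K)²`, so `diag(K, K) = |J|` by uniqueness of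
positive square roots, and `|J| + J = 2 J⁺ ≥ 0`: the block matrix `[[K, H], [Hᵀ, K]]` is positive
semidefinite. Its quadratic form at `(t u, v)` is `t² uᵀKu + 2t uᵀHv + vᵀKv ≥ 0` for every real
`t`, and the discriminant of this quadratic gives the inequality.
-/

open Matrix
open scoped MatrixOrder ComplexOrder

namespace CFC

variable {A : Type*} [NonUnitalRing A] [StarRing A] [TopologicalSpace A]
  [Module ℝ A] [SMulCommClass ℝ A A] [IsScalarTower ℝ A A]
  [NonUnitalContinuousFunctionalCalculus ℝ A IsSelfAdjoint]
  [PartialOrder A] [StarOrderedRing A] [NonnegSpectrumClass ℝ A]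
  [IsTopologicalRing A] [T2Space A]

lemma nonneg_add_of_mul_self_eq {a k : A} (ha : IsSelfAdjoint a) (hk : 0 ≤ k)
    (h : k * k = a * a) : 0 ≤ k + a := by
  have hk_abs : k = abs a := by
    rw [abs, ha.star_eq, sqrt_unique h hk]
  rw [hk_abs, abs_add_self a]
  exact smul_nonneg zero_le_two (posPart_nonneg a)

end CFC

namespace Matrix

variable {m n : Type*} [Fintype m] [Fintype n]

lemma PosSemidef.fromBlocks_zero_zero {R : Type*} [CommRing R] [PartialOrder R] [StarRing R]
    [StarOrderedRing R] {A : Matrix m m R} {D : Matrix n n R} (hA : A.PosSemidef)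
    (hD : D.PosSemidef) : (fromBlocks A 0 0 D).PosSemidef := by
  refine .of_dotProduct_mulVec_nonneg (hA.1.fromBlocks (by simp) hD.1) fun x => ?_
  obtain ⟨x₁, x₂, rfl⟩ : ∃ x₁ x₂, x = x₁ ⊕ᵥ x₂ := ⟨_, _, (Sum.elim_comp_inl_inr x).symm⟩
  simpa [Function.star_sumElim, fromBlocks_mulVec, sumElim_dotProduct_sumElim] using
    add_nonneg (hA.dotProduct_mulVec_nonneg x₁) (hD.dotProduct_mulVec_nonneg x₂)

lemma sumElim_dotProduct_fromBlocks_mulVec_sumElim {R : Type*} [CommSemiring R]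
    (A : Matrix m m R) (B : Matrix m n R) (D : Matrix n n R) (x : m → R) (y : n → R) :
    (x ⊕ᵥ y) ⬝ᵥ fromBlocks A B Bᵀ D *ᵥ (x ⊕ᵥ y) =
      x ⬝ᵥ A *ᵥ x + 2 * (x ⬝ᵥ B *ᵥ y) + y ⬝ᵥ D *ᵥ y := by
  rw [fromBlocks_mulVec, sumElim_dotProduct_sumElim]
  simp only [Sum.elim_comp_inl, Sum.elim_comp_inr, dotProduct_add, mulVec_transpose,
    dotProduct_comm y (x ᵥ* B), ← dotProduct_mulVec]
  ring

variable [DecidableEq m] [DecidableEq n] {𝕜 : Type*} [RCLike 𝕜]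

lemma posSemidef_fromBlocks_of_mul_self_eq {K₁ : Matrix m m 𝕜} {K₂ : Matrix n n 𝕜}
    {H : Matrix m n 𝕜} (hK₁ : K₁.PosSemidef) (hK₂ : K₂.PosSemidef) (h₁ : K₁ * K₁ = H * Hᴴ)
    (h₂ : K₂ * K₂ = Hᴴ * H) : (fromBlocks K₁ H Hᴴ K₂).PosSemidef := by
  have hJ : IsSelfAdjoint (fromBlocks 0 H Hᴴ 0) := by
    simp [IsSelfAdjoint, star_eq_conjTranspose, fromBlocks_conjTranspose]
  have hK : 0 ≤ fromBlocks K₁ 0 0 K₂ := nonneg_iff_posSemidef.mpr (hK₁.fromBlocks_zero_zero hK₂)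
  have hsq : fromBlocks K₁ 0 0 K₂ * fromBlocks K₁ 0 0 K₂ =
      fromBlocks 0 H Hᴴ 0 * fromBlocks 0 H Hᴴ 0 := by
    simp [fromBlocks_multiply, h₁, h₂]
  simpa [fromBlocks_add] using nonneg_iff_posSemidef.mp (CFC.nonneg_add_of_mul_self_eq hJ hK hsq)

end Matrix

lemma abs_le_sqrt_mul_sqrt_of_forall_quadratic_nonneg {a b c : ℝ} (ha : 0 ≤ a)
    (h : ∀ t : ℝ, 0 ≤ a * (t * t) + 2 * c * t + b) : |c| ≤ √a * √b := by
  have hdiscrim := discrim_le_zero h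
  rw [discrim] at hdiscrim
  rw [← Real.sqrt_mul ha, ← Real.sqrt_sq_eq_abs]
  exact Real.sqrt_le_sqrt (by nlinarith)

/-- Let `H` be a real antisymmetric `d×d` matrix (`Hᵀ = −H`) and let
`|H| = (−H²)^{1/2}` denote the positive semidefinite square root of `−H² = Hᵀ H`
(here given as any positive semidefinite matrix `K` with `K² = −H²`; such a `K` is
unique).  Then for all `u, v ∈ ℝ^d`, `|uᵀ H v| ≤ (uᵀ |H| u)^{1/2} (vᵀ |H| v)^{1/2}`. -/
theorem abs_skew_pairing_le
    (d : ℕ) (H K : Matrix (Fin d) (Fin d) ℝ)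
    (hH : Hᵀ = -H) (hK : K.PosSemidef) (hK2 : K * K = -(H * H))
    (u v : Fin d → ℝ) :
    |u ⬝ᵥ H.mulVec v| ≤
      Real.sqrt (u ⬝ᵥ K.mulVec u) * Real.sqrt (v ⬝ᵥ K.mulVec v) := by
  have hblocks : (fromBlocks K H Hᵀ K).PosSemidef := by
    refine posSemidef_fromBlocks_of_mul_self_eq hK hK ?_ ?_ <;>
      simp [conjTranspose_eq_transpose_of_trivial, hH, hK2]
  refine abs_le_sqrt_mul_sqrt_of_forall_quadratic_nonneg
    (by simpa using hK.dotProduct_mulVec_nonneg u) fun t => ?_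
  have hquad := hblocks.dotProduct_mulVec_nonneg (t • u ⊕ᵥ v)
  rw [star_trivial, sumElim_dotProduct_fromBlocks_mulVec_sumElim] at hquad
  simp only [mulVec_smul, dotProduct_smul, smul_dotProduct, smul_eq_mul] at hquad
  linarith
end

section
/- Let H be a real antisymmetric d×d matrix, ã a real symmetric positive semidefinite d×d matrix and C > 0 such that |H| ≤ C ã in the Loewner (positive semidefinite) order, where |H| = (−H²)^{1/2}. Then for all u, v ∈ ℝ^d, |uᵀHv| ≤ C (uᵀ ã u)^{1/2} (vᵀ ã v)^{1/2}. -/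
/-!
`M = i • H` is Hermitian and `K`, read as a complex matrix, is a positive square root of
`M * M = -H²`; by uniqueness of positive square roots `K = |M|`, hence `M ≤ K`. Testing
`K - M ≥ 0` on the complex vector `u + i v` gives `0 ≤ uᵀKu + vᵀKv + 2 uᵀHv`. Replacing `u` by
`s • u`, this quadratic in `s` is nonnegative, so its discriminant gives
`(uᵀHv)² ≤ (uᵀKu)(vᵀKv)`, and `K ≤ C ã` finishes.
-/

open Matrix
open scoped ComplexOrder

section CStarAlgebra

variable {A : Type*} [CStarAlgebra A] [PartialOrder A] [StarOrderedRing A]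

theorem IsSelfAdjoint.le_of_mul_self_eq {a b : A} (ha : IsSelfAdjoint a) (hb : 0 ≤ b)
    (h : b * b = a * a) : a ≤ b := by
  have hab : b = CFC.abs a := by
    rw [CFC.abs, ha.star_eq, ← h, CFC.sqrt_mul_self b]
  rw [hab, ← sub_nonneg, CFC.abs_sub_self a]
  exact nsmul_nonneg (CFC.negPart_nonneg a) 2

end CStarAlgebra

namespace Matrix

variable {n : Type*}

theorem isHermitian_I_smul_map_ofReal {H : Matrix n n ℝ} (hH : Hᵀ = -H) :
    (Complex.I • H.map Complex.ofReal).IsHermitian := by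
  ext i j
  have hji : H j i = -H i j := by simpa using congrFun (congrFun hH i) j
  simp [hji]

variable [Fintype n]

theorem re_star_dotProduct_map_ofReal_mulVec (N : Matrix n n ℝ) (x : n → ℂ) :
    (star x ⬝ᵥ N.map Complex.ofReal *ᵥ x).re =
      (fun i => (x i).re) ⬝ᵥ N *ᵥ (fun i => (x i).re) +
        (fun i => (x i).im) ⬝ᵥ N *ᵥ (fun i => (x i).im) := by
  simp [dotProduct, mulVec, Complex.re_sum, Finset.mul_sum, ← Finset.sum_add_distrib]

theorem im_star_dotProduct_map_ofReal_mulVec (N : Matrix n n ℝ) (x : n → ℂ) :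
    (star x ⬝ᵥ N.map Complex.ofReal *ᵥ x).im =
      (fun i => (x i).re) ⬝ᵥ N *ᵥ (fun i => (x i).im) -
        (fun i => (x i).im) ⬝ᵥ N *ᵥ (fun i => (x i).re) := by
  simp only [dotProduct, Pi.star_apply, RCLike.star_def, mulVec, map_apply, Finset.mul_sum,
    Complex.im_sum, Complex.mul_im, Complex.conj_re, Complex.ofReal_re, Complex.ofReal_im,
    zero_mul, add_zero, Complex.conj_im, Complex.mul_re, sub_zero, neg_mul,
    ← Finset.sum_sub_distrib]
  refine Finset.sum_congr rfl fun i _ => Finset.sum_congr rfl fun j _ => ?_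
  ring

theorem dotProduct_mulVec_swap_of_transpose_eq_neg {H : Matrix n n ℝ} (hH : Hᵀ = -H)
    (u v : n → ℝ) : v ⬝ᵥ H *ᵥ u = -(u ⬝ᵥ H *ᵥ v) := by
  rw [← dotProduct_transpose_mulVec, hH, neg_mulVec, dotProduct_neg]

theorem PosSemidef.map_ofReal {K : Matrix n n ℝ} (hK : K.PosSemidef) :
    (K.map Complex.ofReal).PosSemidef := by
  have hKc : (K.map Complex.ofReal).IsHermitian := hK.isHermitian.map _ fun _ => by simp
  refine posSemidef_iff_dotProduct_mulVec.mpr ⟨hKc, fun x => ?_⟩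
  rw [Complex.nonneg_iff, re_star_dotProduct_map_ofReal_mulVec]
  exact ⟨add_nonneg (hK.dotProduct_mulVec_nonneg _) (hK.dotProduct_mulVec_nonneg _),
    (hKc.im_star_dotProduct_mulVec_self x).symm⟩

theorem add_two_mul_dotProduct_mulVec_nonneg_of_mul_self_eq_neg {H K : Matrix n n ℝ}
    (hH : Hᵀ = -H) (hK : K.PosSemidef) (hK2 : K * K = -(H * H)) (u v : n → ℝ) :
    0 ≤ u ⬝ᵥ K *ᵥ u + v ⬝ᵥ K *ᵥ v + 2 * (u ⬝ᵥ H *ᵥ v) := by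
  classical
  open scoped MatrixOrder Matrix.Norms.L2Operator in
  have hle : (K.map Complex.ofReal - Complex.I • H.map Complex.ofReal).PosSemidef := by
    refine le_iff.mp ((isHermitian_I_smul_map_ofReal hH).isSelfAdjoint.le_of_mul_self_eq
      (nonneg_iff_posSemidef.mpr hK.map_ofReal) ?_)
    rw [smul_mul_smul_comm, Complex.I_mul_I, neg_one_smul]
    have := congrArg Complex.ofRealHom.mapMatrix hK2
    rwa [map_mul, map_neg, map_mul] at this
  have := hle.re_dotProduct_nonneg (fun i => ⟨u i, v i⟩)
  simp only [sub_mulVec, dotProduct_sub, smul_mulVec, dotProduct_smul, smul_eq_mul,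
    RCLike.re_to_complex, Complex.sub_re, Complex.I_mul_re, re_star_dotProduct_map_ofReal_mulVec,
    im_star_dotProduct_map_ofReal_mulVec] at this
  linarith [dotProduct_mulVec_swap_of_transpose_eq_neg hH u v]

theorem sq_dotProduct_mulVec_le_of_mul_self_eq_neg {H K : Matrix n n ℝ} (hH : Hᵀ = -H)
    (hK : K.PosSemidef) (hK2 : K * K = -(H * H)) (u v : n → ℝ) :
    (u ⬝ᵥ H *ᵥ v) ^ 2 ≤ (u ⬝ᵥ K *ᵥ u) * (v ⬝ᵥ K *ᵥ v) := by
  have hquad (s : ℝ) :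
      0 ≤ (u ⬝ᵥ K *ᵥ u) * (s * s) + 2 * (u ⬝ᵥ H *ᵥ v) * s + v ⬝ᵥ K *ᵥ v := by
    have := add_two_mul_dotProduct_mulVec_nonneg_of_mul_self_eq_neg hH hK hK2 (s • u) v
    simp only [mulVec_smul, dotProduct_smul, smul_dotProduct, smul_eq_mul] at this
    linarith
  have := discrim_le_zero hquad
  rw [discrim] at this
  linarith

end Matrix

theorem abs_skew_pairing_le_of_dominated_general
    (d : ℕ) (H K A : Matrix (Fin d) (Fin d) ℝ) (C : ℝ) (hC : 0 < C)
    (hH : Hᵀ = -H) (hK : K.PosSemidef) (hK2 : K * K = -(H * H))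
    (hle : (C • A - K).PosSemidef)
    (u v : Fin d → ℝ) :
    |u ⬝ᵥ H.mulVec v| ≤
      C * Real.sqrt (u ⬝ᵥ A.mulVec u) * Real.sqrt (v ⬝ᵥ A.mulVec v) := by
  have hdom (x : Fin d → ℝ) : x ⬝ᵥ K *ᵥ x ≤ C * (x ⬝ᵥ A *ᵥ x) := by
    have := hle.dotProduct_mulVec_nonneg x
    simp only [star_trivial, sub_mulVec, smul_mulVec, dotProduct_sub, dotProduct_smul,
      smul_eq_mul] at this
    linarith
  have hCu : 0 ≤ C * (u ⬝ᵥ A *ᵥ u) := (hK.dotProduct_mulVec_nonneg u).trans (hdom u)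
  calc |u ⬝ᵥ H *ᵥ v| ≤ √((C * (u ⬝ᵥ A *ᵥ u)) * (C * (v ⬝ᵥ A *ᵥ v))) :=
        Real.abs_le_sqrt <| (sq_dotProduct_mulVec_le_of_mul_self_eq_neg hH hK hK2 u v).trans <|
          mul_le_mul (hdom u) (hdom v) (hK.dotProduct_mulVec_nonneg v) hCu
    _ = C * √(u ⬝ᵥ A *ᵥ u) * √(v ⬝ᵥ A *ᵥ v) := by
        rw [Real.sqrt_mul hCu, Real.sqrt_mul hC.le, Real.sqrt_mul hC.le]
        linear_combination √(u ⬝ᵥ A *ᵥ u) * √(v ⬝ᵥ A *ᵥ v) * Real.mul_self_sqrt hC.le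

/-- Let `H` be a real antisymmetric `d×d` matrix, `ã` a real
symmetric positive semidefinite `d×d` matrix and `C > 0` such that `|H| ≤ C ã` in the
Loewner order, where `|H| = (−H²)^{1/2}` is the positive semidefinite square root of
`−H² = Hᵀ H` (given as any positive semidefinite `K` with `K² = −H²`; such a `K` is
unique).  Then for all `u, v ∈ ℝ^d`,
`|uᵀ H v| ≤ C (uᵀ ã u)^{1/2} (vᵀ ã v)^{1/2}`. -/
theorem abs_skew_pairing_le_of_dominated
    (d : ℕ) (H K A : Matrix (Fin d) (Fin d) ℝ) (C : ℝ) (hC : 0 < C)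
    (hH : Hᵀ = -H) (hA : A.PosSemidef) (hK : K.PosSemidef) (hK2 : K * K = -(H * H))
    (hle : (C • A - K).PosSemidef)
    (u v : Fin d → ℝ) :
    |u ⬝ᵥ H.mulVec v| ≤
      C * Real.sqrt (u ⬝ᵥ A.mulVec u) * Real.sqrt (v ⬝ᵥ A.mulVec v) :=
  abs_skew_pairing_le_of_dominated_general d H K A C hC hH hK hK2 hle u v
end
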